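/- arXiv:1102.3947 — 3 statements merged into one kernel-verified Lean document; each statement's English description precedes it below -/
import Mathlib

section
/- (Weyl's inequality, upper form) For Hermitian n x n matrices A and B and indices i <= j, \lambda_j(A+B) <= \lambda_i(A) + \lambda_{j-i+1}(B), where \lambda_k denotes the k-th largest eigenvalue. -/
open Matrix

/-- The eigenvalues of a Hermitian matrix, sorted in decreasing order:
`eigDesc hA ⟨0, _⟩` is the largest eigenvalue. -/
noncomputable def eigDesc {n : ℕ} {A : Matrix (Fin n) (Fin n) ℝ} (hA : A.IsHermitian) :
    Fin n → ℝ :=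
  fun i => (hA.eigenvalues ∘ Tuple.sort hA.eigenvalues) i.rev

/-!
Courant–Fischer by a dimension count. Let `u`, `v`, `w` be orthonormal eigenbases of `A`, `B`,
`A + B`, each listed by decreasing eigenvalue. The spans of `u_i, …, u_{n-1}`, of
`v_{j-i}, …, v_{n-1}` and of `w_0, …, w_j` have dimensions `n - i`, `n - (j - i)` and `j + 1`,
which add up to `2n + 1 > 2n`, so they share a nonzero vector `x`. On the first two spans the
quadratic forms of `A` and `B` are at most `λ_i(A)` and `λ_{j-i}(B)`; on the third that of
`A + B` is at least `λ_j(A + B)`. Evaluating at `x` gives the inequality.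
-/

open Module Submodule RealInnerProductSpace

theorem Submodule.finrank_add_finrank_le_finrank_add_finrank_inf {K V : Type*} [DivisionRing K]
    [AddCommGroup V] [Module K V] [FiniteDimensional K V] (s t : Submodule K V) :
    finrank K s + finrank K t ≤ finrank K V + finrank K (s ⊓ t : Submodule K V) := by
  rw [← finrank_sup_add_finrank_inf_eq]
  exact Nat.add_le_add_right (finrank_le _) _

theorem Submodule.exists_mem_inf_inf_ne_zero_of_lt_finrank {K V : Type*} [DivisionRing K]
    [AddCommGroup V] [Module K V] [FiniteDimensional K V] (s t u : Submodule K V)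
    (h : 2 * finrank K V < finrank K s + finrank K t + finrank K u) :
    ∃ x ∈ s ⊓ t ⊓ u, x ≠ 0 := by
  refine exists_mem_ne_zero_of_ne_bot fun hbot => ?_
  have hst := finrank_add_finrank_le_finrank_add_finrank_inf s t
  have hstu := finrank_add_finrank_le_finrank_add_finrank_inf (s ⊓ t) u
  have := finrank_le (s ⊓ t)
  rw [hbot, finrank_bot] at hstu
  omega

theorem LinearIndependent.finrank_span_image_finset {ι R M : Type*} [DivisionRing R]
    [AddCommGroup M] [Module R M] {v : ι → M} (hv : LinearIndependent R v) (s : Finset ι) :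
    finrank R (span R (v '' s)) = s.card := by
  rw [Set.image_eq_range]
  exact (finrank_span_eq_card (hv.comp _ Subtype.val_injective)).trans (Fintype.card_coe s)

section Rayleigh

variable {ι E : Type*} [NormedAddCommGroup E] [InnerProductSpace ℝ E] {T : E →ₗ[ℝ] E}
  {v : ι → E} {μ : ι → ℝ} {s : Finset ι} {c : ℝ} {x : E}

theorem Orthonormal.inner_map_self_le_of_mem_span (hv : Orthonormal ℝ v)
    (hTv : ∀ k, T (v k) = μ k • v k) (hμ : ∀ k ∈ s, μ k ≤ c)
    (hx : x ∈ span ℝ (v '' s)) :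
    ⟪x, T x⟫ ≤ c * ‖x‖ ^ 2 := by
  obtain ⟨a, rfl⟩ := (mem_span_image_finset_iff_exists_fun' ℝ).mp hx
  have hTx : T (∑ k ∈ s, a k • v k) = ∑ k ∈ s, (a k * μ k) • v k := by
    simp only [map_sum, map_smul, hTv, smul_smul]
  rw [hTx, ← real_inner_self_eq_norm_sq, hv.inner_sum, hv.inner_sum, Finset.mul_sum]
  refine Finset.sum_le_sum fun k hk => ?_
  simp only [conj_trivial]
  nlinarith [mul_self_nonneg (a k), hμ k hk]

theorem Orthonormal.le_inner_map_self_of_mem_span (hv : Orthonormal ℝ v)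
    (hTv : ∀ k, T (v k) = μ k • v k) (hμ : ∀ k ∈ s, c ≤ μ k)
    (hx : x ∈ span ℝ (v '' s)) :
    c * ‖x‖ ^ 2 ≤ ⟪x, T x⟫ := by
  have := hv.inner_map_self_le_of_mem_span (T := -T) (μ := -μ) (c := -c)
    (fun k => by simp [hTv]) (fun k hk => neg_le_neg (hμ k hk)) hx
  simpa [inner_neg_right] using this

end Rayleigh

namespace Matrix.IsHermitian

variable {n : ℕ} {A : Matrix (Fin n) (Fin n) ℝ} (hA : A.IsHermitian)

noncomputable def eigenvectorDesc : Fin n → EuclideanSpace ℝ (Fin n) :=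
  fun k => hA.eigenvectorBasis (Tuple.sort hA.eigenvalues k.rev)

theorem orthonormal_eigenvectorDesc : Orthonormal ℝ hA.eigenvectorDesc :=
  hA.eigenvectorBasis.orthonormal.comp _
    ((Tuple.sort hA.eigenvalues).injective.comp Fin.rev_injective)

theorem toEuclideanLin_eigenvectorDesc (k : Fin n) :
    toEuclideanLin A (hA.eigenvectorDesc k) = eigDesc hA k • hA.eigenvectorDesc k :=
  congrArg (WithLp.toLp 2) (hA.mulVec_eigenvectorBasis _)

theorem eigDesc_antitone : Antitone (eigDesc hA) := fun _ _ hkl =>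
  Tuple.monotone_sort hA.eigenvalues (Fin.rev_le_rev.mpr hkl)

theorem finrank_span_eigenvectorDesc (s : Finset (Fin n)) :
    finrank ℝ (span ℝ (hA.eigenvectorDesc '' s)) = s.card :=
  hA.orthonormal_eigenvectorDesc.linearIndependent.finrank_span_image_finset s

end Matrix.IsHermitian

/-- Weyl's inequality (upper form), with 0-based indices: for `i ≤ j`,
`λ_j(A+B) ≤ λ_i(A) + λ_{j-i}(B)`. -/
theorem weyl_upper {n : ℕ} {A B : Matrix (Fin n) (Fin n) ℝ}
    (hA : A.IsHermitian) (hB : B.IsHermitian) (i j : Fin n) (hij : i ≤ j) :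
    eigDesc (hA.add hB) j ≤
      eigDesc hA i + eigDesc hB ⟨j.val - i.val, lt_of_le_of_lt (Nat.sub_le _ _) j.isLt⟩ := by
  set k : Fin n := ⟨j.val - i.val, lt_of_le_of_lt (Nat.sub_le _ _) j.isLt⟩
  set hC := hA.add hB
  obtain ⟨x, hx, hx0⟩ := exists_mem_inf_inf_ne_zero_of_lt_finrank
    (span ℝ (hA.eigenvectorDesc '' Finset.Ici i)) (span ℝ (hB.eigenvectorDesc '' Finset.Ici k))
    (span ℝ (hC.eigenvectorDesc '' Finset.Iic j)) (by
      simp only [IsHermitian.finrank_span_eigenvectorDesc, Fin.card_Ici, Fin.card_Iic,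
        finrank_euclideanSpace_fin, k]
      omega)
  rw [mem_inf, mem_inf] at hx
  have hxA := hA.orthonormal_eigenvectorDesc.inner_map_self_le_of_mem_span
    hA.toEuclideanLin_eigenvectorDesc
    (fun _ hl => hA.eigDesc_antitone (Finset.mem_Ici.mp hl)) hx.1.1
  have hxB := hB.orthonormal_eigenvectorDesc.inner_map_self_le_of_mem_span
    hB.toEuclideanLin_eigenvectorDesc
    (fun _ hl => hB.eigDesc_antitone (Finset.mem_Ici.mp hl)) hx.1.2
  have hxC := hC.orthonormal_eigenvectorDesc.le_inner_map_self_of_mem_span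
    hC.toEuclideanLin_eigenvectorDesc
    (fun _ hl => hC.eigDesc_antitone (Finset.mem_Iic.mp hl)) hx.2
  rw [map_add, LinearMap.add_apply, inner_add_right] at hxC
  refine le_of_mul_le_mul_right ?_ (by positivity : 0 < ‖x‖ ^ 2)
  rw [add_mul]
  exact hxC.trans (add_le_add hxA hxB)
end

section
/- (Weyl's inequality, lower form) For Hermitian n x n matrices A and B and indices j <= i, \lambda_j(A+B) >= \lambda_i(A) + \lambda_{j-i+n}(B), where \lambda_k denotes the k-th largest eigenvalue. -/
/-!
On the span of the eigenvectors of `A` for its `i + 1` largest eigenvalues the quadratic form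
satisfies `⟪v, A v⟫ ≥ λ_i(A) ‖v‖²`; likewise `⟪v, B v⟫ ≥ λ_r(B) ‖v‖²` on a space of dimension
`r + 1 = n - (i - j)`, while `⟪v, (A + B) v⟫ ≤ λ_j(A + B) ‖v‖²` on the span of the last `n - j`
eigenvectors of `A + B`. The three dimensions add up to `2n + 1`, so the three subspaces share a
nonzero vector, and evaluating the quadratic forms there gives the inequality.
-/

open Matrix

open Finset Module
open scoped RealInnerProductSpace

namespace Submodule

variable {K V : Type*} [DivisionRing K] [AddCommGroup V] [Module K V] [FiniteDimensional K V]

theorem exists_ne_zero_mem_inf_inf_of_finrank_lt (U W X : Submodule K V)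
    (h : 2 * finrank K V < finrank K U + finrank K W + finrank K X) :
    ∃ v ≠ 0, v ∈ U ∧ v ∈ W ∧ v ∈ X := by
  by_contra! hnone
  have hdisj : Disjoint (U ⊓ W) X := disjoint_def.mpr fun v ⟨hvU, hvW⟩ hvX ↦
    not_not.mp fun hv ↦ hnone v hv hvU hvW hvX
  have := finrank_add_finrank_le_of_disjoint hdisj
  have := finrank_sup_add_finrank_inf_eq U W
  have := (U ⊔ W).finrank_le
  omega

end Submodule

namespace OrthonormalBasis

variable {ι E : Type*} [Fintype ι] [NormedAddCommGroup E] [InnerProductSpace ℝ E]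
  (e : OrthonormalBasis ι ℝ E)

theorem finrank_span_image (S : Finset ι) : finrank ℝ (Submodule.span ℝ (e '' S)) = #S := by
  rw [Set.image_eq_range]
  exact (finrank_span_eq_card (e.orthonormal.linearIndependent.comp _ Subtype.val_injective)).trans
    (by simp)

theorem inner_eq_zero_of_mem_span_image {S : Set ι} {v : E}
    (hv : v ∈ Submodule.span ℝ (e '' S)) {k : ι} (hk : k ∉ S) : ⟪e k, v⟫ = 0 := by
  have hspan : Submodule.span ℝ (e '' S) ≤ (ℝ ∙ e k)ᗮ := by
    rw [Submodule.span_le]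
    rintro _ ⟨m, hm, rfl⟩
    exact Submodule.mem_orthogonal_singleton_iff_inner_right.mpr
      (e.orthonormal.2 fun hkm ↦ hk (hkm ▸ hm))
  exact Submodule.mem_orthogonal_singleton_iff_inner_right.mp (hspan hv)

variable {T : E →ₗ[ℝ] E} {μ : ι → ℝ}

theorem inner_map_self_eq_sum (hT : ∀ k, T (e k) = μ k • e k) (v : E) :
    ⟪v, T v⟫ = ∑ k, μ k * ⟪e k, v⟫ ^ 2 := by
  have hTv : T v = ∑ k, (⟪e k, v⟫ * μ k) • e k := by
    conv_lhs => rw [← e.sum_repr' v]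
    simp only [map_sum, map_smul, hT, smul_smul]
  simp only [hTv, inner_sum, real_inner_smul_right, real_inner_comm v]
  exact sum_congr rfl fun k _ ↦ by ring

theorem mul_norm_sq_le_inner_map_self (hT : ∀ k, T (e k) = μ k • e k) {S : Set ι} {c : ℝ}
    (hc : ∀ k ∈ S, c ≤ μ k) {v : E} (hv : v ∈ Submodule.span ℝ (e '' S)) :
    c * ‖v‖ ^ 2 ≤ ⟪v, T v⟫ := by
  rw [e.inner_map_self_eq_sum hT, ← e.sum_sq_inner_right v, mul_sum]
  refine sum_le_sum fun k _ ↦ ?_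
  by_cases hk : k ∈ S
  · exact mul_le_mul_of_nonneg_right (hc k hk) (sq_nonneg _)
  · simp [e.inner_eq_zero_of_mem_span_image hv hk]

theorem inner_map_self_le_mul_norm_sq (hT : ∀ k, T (e k) = μ k • e k) {S : Set ι} {c : ℝ}
    (hc : ∀ k ∈ S, μ k ≤ c) {v : E} (hv : v ∈ Submodule.span ℝ (e '' S)) :
    ⟪v, T v⟫ ≤ c * ‖v‖ ^ 2 := by
  simpa using e.mul_norm_sq_le_inner_map_self (T := -T) (μ := -μ) (c := -c)
    (fun k ↦ by simp [hT]) (fun k hk ↦ neg_le_neg (hc k hk)) hv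

end OrthonormalBasis

section eigDesc

variable {n : ℕ} {A : Matrix (Fin n) (Fin n) ℝ}

theorem eigDesc_antitone (hA : A.IsHermitian) : Antitone (eigDesc hA) :=
  fun _ _ hkl ↦ Tuple.monotone_sort hA.eigenvalues (Fin.rev_le_rev.mpr hkl)

noncomputable def eigDescBasis (hA : A.IsHermitian) :
    OrthonormalBasis (Fin n) ℝ (EuclideanSpace ℝ (Fin n)) :=
  hA.eigenvectorBasis.reindex (Fin.revPerm.trans (Tuple.sort hA.eigenvalues)).symm

theorem toEuclideanLin_eigDescBasis (hA : A.IsHermitian) (k : Fin n) :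
    A.toEuclideanLin (eigDescBasis hA k) = eigDesc hA k • eigDescBasis hA k := by
  simpa [eigDescBasis, eigDesc, toLpLin_apply] using
    congrArg (WithLp.toLp 2) (hA.mulVec_eigenvectorBasis (Tuple.sort hA.eigenvalues k.rev))

theorem eigDesc_mul_norm_sq_le_inner (hA : A.IsHermitian) {i : Fin n}
    {v : EuclideanSpace ℝ (Fin n)} (hv : v ∈ Submodule.span ℝ (eigDescBasis hA '' Iic i)) :
    eigDesc hA i * ‖v‖ ^ 2 ≤ ⟪v, A.toEuclideanLin v⟫ :=
  (eigDescBasis hA).mul_norm_sq_le_inner_map_self (toEuclideanLin_eigDescBasis hA)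
    (fun _ hk ↦ eigDesc_antitone hA (mem_Iic.mp hk)) hv

theorem inner_le_eigDesc_mul_norm_sq (hA : A.IsHermitian) {j : Fin n}
    {v : EuclideanSpace ℝ (Fin n)} (hv : v ∈ Submodule.span ℝ (eigDescBasis hA '' Ici j)) :
    ⟪v, A.toEuclideanLin v⟫ ≤ eigDesc hA j * ‖v‖ ^ 2 :=
  (eigDescBasis hA).inner_map_self_le_mul_norm_sq (toEuclideanLin_eigDescBasis hA)
    (fun _ hk ↦ eigDesc_antitone hA (mem_Ici.mp hk)) hv

end eigDesc

/-- With 0-based indices the 1-based index `j - i + n` becomes `n - 1 - (i - j)`. -/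
theorem weyl_lower {n : ℕ} {A B : Matrix (Fin n) (Fin n) ℝ}
    (hA : A.IsHermitian) (hB : B.IsHermitian) (i j : Fin n) (hij : j ≤ i) :
    eigDesc hA i + eigDesc hB ⟨n - 1 - (i.val - j.val), by have := i.isLt; omega⟩ ≤
      eigDesc (hA.add hB) j := by
  set r : Fin n := ⟨n - 1 - (i.val - j.val), by have := i.isLt; omega⟩
  obtain ⟨v, hv, hvA, hvB, hvAB⟩ := Submodule.exists_ne_zero_mem_inf_inf_of_finrank_lt
    (Submodule.span ℝ (eigDescBasis hA '' Iic i)) (Submodule.span ℝ (eigDescBasis hB '' Iic r))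
    (Submodule.span ℝ (eigDescBasis (hA.add hB) '' Ici j)) (by
      simp only [OrthonormalBasis.finrank_span_image, finrank_euclideanSpace_fin, Fin.card_Iic,
        Fin.card_Ici, r]
      omega)
  have hbound : (eigDesc hA i + eigDesc hB r) * ‖v‖ ^ 2 ≤ eigDesc (hA.add hB) j * ‖v‖ ^ 2 :=
    calc (eigDesc hA i + eigDesc hB r) * ‖v‖ ^ 2
        = eigDesc hA i * ‖v‖ ^ 2 + eigDesc hB r * ‖v‖ ^ 2 := add_mul ..
      _ ≤ ⟪v, A.toEuclideanLin v⟫ + ⟪v, B.toEuclideanLin v⟫ :=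
          add_le_add (eigDesc_mul_norm_sq_le_inner hA hvA) (eigDesc_mul_norm_sq_le_inner hB hvB)
      _ = ⟪v, (A + B).toEuclideanLin v⟫ := by rw [map_add, LinearMap.add_apply, inner_add_right]
      _ ≤ eigDesc (hA.add hB) j * ‖v‖ ^ 2 := inner_le_eigDesc_mul_norm_sq (hA.add hB) hvAB
  exact le_of_mul_le_mul_right hbound (by positivity)
end

section
/- Let A be a linear operator on n x n symmetric matrices mapping PSD to PSD, and let r >= 1. Then every PSD matrix X of rank at most r is the unique PSD solution of A(Y) = A(X) if and only if every nonzero symmetric matrix W in the null space of A has at least r+1 negative eigenvalues. -/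
/-!
Write `W = W⁺ - W⁻` with `W⁺, W⁻` positive semidefinite and `rank W⁻` the number of negative
eigenvalues of `W`. If some nonzero `W` in the null space has at most `r` negative eigenvalues, then
`X = W⁻` and `Y = W⁺` are distinct PSD solutions of `A Y = A X` with `rank X ≤ r`. Conversely, if
`Y ≠ X` are PSD with `A Y = A X`, then `W = Y - X` lies in the null space and `W + X = Y ⪰ 0`;
compressing with the spectral projection `Q` onto the negative eigenspace of `W` gives
`Q X Q ⪰ W⁻`, so `W` has at most `rank X` negative eigenvalues.
-/

open Matrix

/-- The number of negative eigenvalues (with multiplicity) of a Hermitian matrix. -/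
noncomputable def negEigCount {n : ℕ} {W : Matrix (Fin n) (Fin n) ℝ}
    (hW : W.IsHermitian) : ℕ :=
  (Finset.univ.filter fun i => hW.eigenvalues i < 0).card
open scoped ComplexOrder

namespace Matrix

variable {n 𝕜 : Type*} [Fintype n] [RCLike 𝕜]

theorem rank_le_rank_of_posSemidef_sub {A B : Matrix n n 𝕜} (hB : B.PosSemidef)
    (hAB : (A - B).PosSemidef) : B.rank ≤ A.rank := by
  have hker : LinearMap.ker A.mulVecLin ≤ LinearMap.ker B.mulVecLin := by
    intro x hx
    simp only [LinearMap.mem_ker, mulVecLin_apply] at hx ⊢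
    have hdiff := hAB.dotProduct_mulVec_nonneg x
    rw [sub_mulVec, hx, zero_sub, dotProduct_neg, neg_nonneg] at hdiff
    exact (hB.dotProduct_mulVec_zero_iff x).mp
      (le_antisymm hdiff (hB.dotProduct_mulVec_nonneg x))
  have hdimA := LinearMap.finrank_range_add_finrank_ker A.mulVecLin
  have hdimB := LinearMap.finrank_range_add_finrank_ker B.mulVecLin
  have hdimker := Submodule.finrank_mono hker
  unfold rank
  omega

namespace IsHermitian

variable [DecidableEq n] {A : Matrix n n 𝕜}

theorem cfc_id (hA : A.IsHermitian) : hA.cfc id = A := by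
  conv_rhs => rw [hA.spectral_theorem]
  rfl

theorem cfc_sub (hA : A.IsHermitian) (f g : ℝ → ℝ) : hA.cfc (f - g) = hA.cfc f - hA.cfc g := by
  simp only [IsHermitian.cfc, ← map_sub, diagonal_sub]
  congr 2
  ext i
  simp

theorem cfc_neg (hA : A.IsHermitian) (f : ℝ → ℝ) : hA.cfc (-f) = -hA.cfc f := by
  simp only [IsHermitian.cfc, ← map_neg, diagonal_neg]
  congr 2
  ext i
  simp

theorem cfc_mul (hA : A.IsHermitian) (f g : ℝ → ℝ) : hA.cfc (f * g) = hA.cfc f * hA.cfc g := by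
  simp only [IsHermitian.cfc, ← map_mul, diagonal_mul_diagonal]
  congr 2
  ext i
  simp

theorem isHermitian_cfc (hA : A.IsHermitian) (f : ℝ → ℝ) : (hA.cfc f).IsHermitian := by
  rw [IsHermitian.cfc, Unitary.conjStarAlgAut_apply, star_eq_conjTranspose]
  exact isHermitian_mul_mul_conjTranspose _
    (isHermitian_diagonal_iff.mpr fun _ => RCLike.conj_ofReal _)

theorem posSemidef_cfc (hA : A.IsHermitian) {f : ℝ → ℝ} (hf : ∀ i, 0 ≤ f (hA.eigenvalues i)) :
    (hA.cfc f).PosSemidef := by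
  rw [IsHermitian.cfc, Unitary.conjStarAlgAut_apply, star_eq_conjTranspose]
  refine (PosSemidef.diagonal fun i => ?_).mul_mul_conjTranspose_same _
  simpa using hf i

theorem rank_cfc (hA : A.IsHermitian) (f : ℝ → ℝ) :
    (hA.cfc f).rank = Fintype.card {i // f (hA.eigenvalues i) ≠ 0} := by
  rw [IsHermitian.cfc, Unitary.conjStarAlgAut_apply, ← Unitary.coe_star]
  simp [-isUnit_iff_ne_zero, -Unitary.coe_star, rank_diagonal]

theorem rank_cfc_negPart (hA : A.IsHermitian) :
    (hA.cfc (·⁻)).rank = Fintype.card {i // hA.eigenvalues i < 0} := by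
  rw [rank_cfc]
  exact Fintype.card_congr (Equiv.subtypeEquivRight fun i => by simp [negPart_eq_zero])

theorem cfc_posPart_sub_cfc_negPart (hA : A.IsHermitian) : hA.cfc (·⁺) - hA.cfc (·⁻) = A := by
  rw [← cfc_sub]
  convert hA.cfc_id
  exact funext posPart_sub_negPart

theorem card_neg_eigenvalues_le_rank (hA : A.IsHermitian) {X : Matrix n n 𝕜}
    (hAX : (A + X).PosSemidef) :
    Fintype.card {i // hA.eigenvalues i < 0} ≤ X.rank := by
  set Q := hA.cfc (Set.indicator (Set.Iio 0) 1)
  have hQAQ : Q * A * Q = -hA.cfc (·⁻) := by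
    conv_lhs => rw [← hA.cfc_id]
    rw [← cfc_mul, ← cfc_mul, ← cfc_neg]
    congr 1
    ext x
    by_cases hx : x < 0
    · simp [hx, negPart_eq_neg.mpr hx.le]
    · simp [hx, negPart_eq_zero.mpr (not_lt.mp hx)]
  -- compress `A + X ⪰ 0` to the negative eigenspace: `Qᴴ (A + X) Q ⪰ 0` and `Qᴴ = Q`
  have hcompress : (Q * X * Q - hA.cfc (·⁻)).PosSemidef := by
    have := hAX.conjTranspose_mul_mul_same Q
    rwa [(hA.isHermitian_cfc _).eq, Matrix.mul_add, Matrix.add_mul, hQAQ, neg_add_eq_sub] at this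
  calc Fintype.card {i // hA.eigenvalues i < 0} = (hA.cfc (·⁻)).rank := hA.rank_cfc_negPart.symm
    _ ≤ (Q * X * Q).rank :=
      rank_le_rank_of_posSemidef_sub (hA.posSemidef_cfc fun _ => negPart_nonneg _) hcompress
    _ ≤ X.rank := (rank_mul_le_left _ _).trans (rank_mul_le_right _ _)

end IsHermitian
end Matrix

theorem negEigCount_eq_card {n : ℕ} {W : Matrix (Fin n) (Fin n) ℝ} (hW : W.IsHermitian) :
    negEigCount hW = Fintype.card {i // hW.eigenvalues i < 0} :=
  (Fintype.card_subtype _).symm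

theorem psd_unique_iff_nullspace_negative_eigenvalues_general {n m r : ℕ}
    (A : Matrix (Fin n) (Fin n) ℝ →ₗ[ℝ] Matrix (Fin m) (Fin m) ℝ) :
    (∀ X : Matrix (Fin n) (Fin n) ℝ, X.PosSemidef → X.rank ≤ r →
      ∀ Y : Matrix (Fin n) (Fin n) ℝ, Y.PosSemidef → A Y = A X → Y = X) ↔
    (∀ W : Matrix (Fin n) (Fin n) ℝ, ∀ hW : W.IsHermitian, A W = 0 → W ≠ 0 →
      r + 1 ≤ negEigCount hW) := by
  refine ⟨fun huniq W hW hAW hW0 => ?_, fun hnull X hX hXrank Y hY hAYX => ?_⟩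
  · by_contra hfew
    have hdecomp := hW.cfc_posPart_sub_cfc_negPart
    have hNrank : (hW.cfc (·⁻)).rank ≤ r := by
      rw [hW.rank_cfc_negPart, ← negEigCount_eq_card]
      omega
    have hPN := huniq _ (hW.posSemidef_cfc fun _ => negPart_nonneg _) hNrank _
      (hW.posSemidef_cfc fun _ => posPart_nonneg _)
      (by rw [← sub_eq_zero, ← map_sub, hdecomp, hAW])
    exact hW0 (by rw [← hdecomp, hPN, sub_self])
  · by_contra hYX
    have hW : (Y - X).IsHermitian := hY.isHermitian.sub hX.isHermitian
    have hmany := hnull (Y - X) hW (by rw [map_sub, hAYX, sub_self]) (sub_ne_zero.mpr hYX)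
    have hfew := hW.card_neg_eigenvalues_le_rank (X := X) (by rwa [sub_add_cancel])
    rw [negEigCount_eq_card] at hmany
    omega

theorem psd_unique_iff_nullspace_negative_eigenvalues {n m r : ℕ} (hr : 1 ≤ r)
    (A : Matrix (Fin n) (Fin n) ℝ →ₗ[ℝ] Matrix (Fin m) (Fin m) ℝ)
    (hpsd : ∀ X : Matrix (Fin n) (Fin n) ℝ, X.PosSemidef → (A X).PosSemidef) :
    (∀ X : Matrix (Fin n) (Fin n) ℝ, X.PosSemidef → X.rank ≤ r →
      ∀ Y : Matrix (Fin n) (Fin n) ℝ, Y.PosSemidef → A Y = A X → Y = X) ↔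
    (∀ W : Matrix (Fin n) (Fin n) ℝ, ∀ hW : W.IsHermitian, A W = 0 → W ≠ 0 →
      r + 1 ≤ negEigCount hW) :=
  psd_unique_iff_nullspace_negative_eigenvalues_general A
end
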